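/- (Caro–Wei bound) Let G = (V, E) be a finite simple graph and let d_v denote the degree of vertex v. Then the independence number satisfies α(G) ≥ ∑_{v ∈ V} 1/(1 + d_v). -/

import Mathlib

/-!
Greedy argument: give each vertex `v` of a vertex set `A` the weight `1 / (1 + d)`, where `d` is
its degree inside `A`. Pick `v ∈ A` of minimum degree `d`, put it into the independent set and
delete its closed neighbourhood. That neighbourhood has `d + 1` vertices, each of weight at most
`1 / (1 + d)`, so it carries total weight at most `1`; deleting vertices only increases the
weights of the remaining ones, so induction on `A` gains one vertex for every unit of weight.
-/

open Finset

namespace SimpleGraph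

variable {V : Type*} (G : SimpleGraph V) [DecidableRel G.Adj]

noncomputable def caroWeiWeight (A : Finset V) (v : V) : ℝ :=
  1 / (1 + #{u ∈ A | G.Adj v u})

variable {G}

lemma caroWeiWeight_le_of_subset {A B : Finset V} (hBA : B ⊆ A) (v : V) :
    G.caroWeiWeight A v ≤ G.caroWeiWeight B v := by
  unfold caroWeiWeight
  gcongr

lemma sum_caroWeiWeight_closedNbhd_le_one [DecidableEq V] {A : Finset V} {v : V} (hv : v ∈ A)
    (hmin : ∀ u ∈ A, #{w ∈ A | G.Adj v w} ≤ #{w ∈ A | G.Adj u w}) :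
    ∑ u ∈ insert v {w ∈ A | G.Adj v w}, G.caroWeiWeight A u ≤ 1 := by
  set d := #{w ∈ A | G.Adj v w}
  have hcard : #(insert v {w ∈ A | G.Adj v w}) = d + 1 :=
    card_insert_of_notMem (by simp)
  have hterm : ∀ u ∈ insert v {w ∈ A | G.Adj v w}, G.caroWeiWeight A u ≤ 1 / (1 + d) := by
    intro u hu
    unfold caroWeiWeight
    gcongr
    exact hmin u (insert_subset hv (filter_subset _ _) hu)
  calc ∑ u ∈ insert v {w ∈ A | G.Adj v w}, G.caroWeiWeight A u
      ≤ ∑ _u ∈ insert v {w ∈ A | G.Adj v w}, 1 / (1 + (d : ℝ)) := sum_le_sum hterm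
    _ = 1 := by
      rw [sum_const, hcard, nsmul_eq_mul]
      push_cast
      field_simp
      ring

variable (G) in
lemma exists_isIndepSet_subset_sum_caroWeiWeight_le [DecidableEq V] (A : Finset V) :
    ∃ s ⊆ A, G.IsIndepSet s ∧ ∑ v ∈ A, G.caroWeiWeight A v ≤ #s := by
  induction A using Finset.strongInduction with
  | H A ih =>
  rcases A.eq_empty_or_nonempty with rfl | hA
  · exact ⟨∅, empty_subset _, by simp, by simp⟩
  obtain ⟨v, hv, hmin⟩ := A.exists_min_image (fun u => #{w ∈ A | G.Adj u w}) hA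
  set N := insert v {w ∈ A | G.Adj v w}
  have hNA : N ⊆ A := insert_subset hv (filter_subset _ _)
  obtain ⟨s, hsA, hs, hsum⟩ :=
    ih (A \ N) (sdiff_ssubset hNA ⟨v, mem_insert_self _ _⟩)
  have hvs : v ∉ s := fun h => (mem_sdiff.mp (hsA h)).2 (mem_insert_self _ _)
  have hnadj : ∀ u ∈ s, ¬ G.Adj v u := fun u hu hvu =>
    have hu' := mem_sdiff.mp (hsA hu)
    hu'.2 (mem_insert_of_mem (mem_filter.mpr ⟨hu'.1, hvu⟩))
  refine ⟨insert v s, insert_subset hv (hsA.trans sdiff_subset), ?_, ?_⟩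
  · rw [coe_insert, isIndepSet_iff, Set.pairwise_insert]
    exact ⟨hs, fun u hu _ => ⟨hnadj u hu, fun huv => hnadj u hu huv.symm⟩⟩
  · calc ∑ u ∈ A, G.caroWeiWeight A u
        = ∑ u ∈ A \ N, G.caroWeiWeight A u + ∑ u ∈ N, G.caroWeiWeight A u :=
          (sum_sdiff hNA).symm
      _ ≤ ∑ u ∈ A \ N, G.caroWeiWeight (A \ N) u + 1 := by
          gcongr with u
          · exact caroWeiWeight_le_of_subset sdiff_subset u
          · exact sum_caroWeiWeight_closedNbhd_le_one hv hmin
      _ ≤ #(insert v s) := by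
          rw [card_insert_of_notMem hvs]
          push_cast
          linarith

end SimpleGraph

open SimpleGraph in
theorem caro_wei_bound_general {V : Type*} [Fintype V]
    (G : SimpleGraph V) [DecidableRel G.Adj] :
    ∃ s : Finset V, (∀ u ∈ s, ∀ v ∈ s, ¬ G.Adj u v) ∧
      (∑ v : V, (1 : ℝ) / (1 + (G.degree v : ℝ))) ≤ (s.card : ℝ) := by
  classical
  obtain ⟨s, -, hs, hsum⟩ := G.exists_isIndepSet_subset_sum_caroWeiWeight_le univ
  refine ⟨s, fun u hu v hv huv => ?_, ?_⟩
  · exact hs hu hv (G.ne_of_adj huv) huv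
  · simpa [caroWeiWeight, ← neighborFinset_eq_filter, card_neighborFinset_eq_degree] using hsum

/-- Caro–Wei bound: `α(G) ≥ ∑_v 1/(1 + d_v)`. -/
theorem caro_wei_bound {V : Type*} [Fintype V] [DecidableEq V]
    (G : SimpleGraph V) [DecidableRel G.Adj] :
    ∃ s : Finset V, (∀ u ∈ s, ∀ v ∈ s, ¬ G.Adj u v) ∧
      (∑ v : V, (1 : ℝ) / (1 + (G.degree v : ℝ))) ≤ (s.card : ℝ) :=
  caro_wei_bound_general G
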